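/- Let T > 0, let λ_x, λ_y be real constants, and let x, y, θ, λ_θ : ℝ → ℝ and u₁ : ℝ → ℝ be functions such that for every t ∈ [0, T]: x has derivative u₁(t)·cos θ(t) at t, y has derivative u₁(t)·sin θ(t) at t, and λ_θ has derivative u₁(t)·sin θ(t)·λ_x − u₁(t)·cos θ(t)·λ_y at t. Then for all t₁, t₂ ∈ [0, T] with λ_θ(t₁) = λ_θ(t₂), one has λ_x·y(t₁) − λ_y·x(t₁) = λ_x·y(t₂) − λ_y·x(t₂); in particular, all points (x(t), y(t)) of the trajectory sharing a common value of λ_θ lie on a single straight line λ_x·y − λ_y·x = constant. -/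

import Mathlib

open Set

/-- Fact 3 (second part): along the trajectory, all points sharing a common value of the
adjoint `λ_θ` lie on the straight line `λ_x y − λ_y x = constant`. -/
theorem stmt_2 (T : ℝ) (hT : 0 < T) (lamx lamy : ℝ)
    (x y θ lamθ u₁ : ℝ → ℝ)
    (hx : ∀ t ∈ Icc (0 : ℝ) T, HasDerivAt x (u₁ t * Real.cos (θ t)) t)
    (hy : ∀ t ∈ Icc (0 : ℝ) T, HasDerivAt y (u₁ t * Real.sin (θ t)) t)
    (hlam : ∀ t ∈ Icc (0 : ℝ) T,
      HasDerivAt lamθ (u₁ t * Real.sin (θ t) * lamx - u₁ t * Real.cos (θ t) * lamy) t) :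
    ∀ t₁ ∈ Icc (0 : ℝ) T, ∀ t₂ ∈ Icc (0 : ℝ) T, lamθ t₁ = lamθ t₂ →
      lamx * y t₁ - lamy * x t₁ = lamx * y t₂ - lamy * x t₂ := by
  set g : ℝ → ℝ := fun t => lamθ t - (lamx * y t - lamy * x t) with hg
  have hderiv : ∀ t ∈ Icc (0 : ℝ) T, HasDerivAt g 0 t := by
    intro t ht
    have := ((hlam t ht).sub (((hy t ht).const_mul lamx).sub ((hx t ht).const_mul lamy)))
    exact this.congr_deriv (by ring)
  have hconst : ∀ t ∈ Icc (0 : ℝ) T, g t = g 0 := by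
    apply constant_of_has_deriv_right_zero
    · exact fun t ht => ((hderiv t ht).continuousAt).continuousWithinAt
    · exact fun t ht => ((hderiv t (Ico_subset_Icc_self ht)).hasDerivWithinAt)
  intro t₁ h₁ t₂ h₂ heq
  have := (hconst t₁ h₁).trans (hconst t₂ h₂).symm
  simp only [hg] at this
  linarith
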